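/- Stable Voting satisfies the Condorcet loser criterion: if a candidate A in an election profile P with at least two candidates is beaten head-to-head by every other candidate, then A is not a Stable Voting winner in P. -/
import Mathlib


/-- An election profile: a finite set of candidates and, for each voter,
a strict linear order (ballot) on the candidates.  `ballot v a b = true`
means that voter `v` ranks candidate `a` above candidate `b`. -/
structure Profile (C V : Type) [DecidableEq C] [Fintype V] where
  cands : Finset C
  ballot : V → C → C → Bool
  ballot_irrefl : ∀ v a, a ∈ cands → ballot v a a = false
  ballot_asymm_total : ∀ v a b, a ∈ cands → b ∈ cands → a ≠ b →
    (ballot v a b = true ↔ ¬ ballot v b a = true)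
  ballot_trans : ∀ v a b c, a ∈ cands → b ∈ cands → c ∈ cands →
    ballot v a b = true → ballot v b c = true → ballot v a c = true

variable {C V : Type} [DecidableEq C] [Fintype V]

/-- The margin of `a` vs. `b`: the number of voters ranking `a` above `b`
minus the number of voters ranking `b` above `a`. -/
def Profile.margin (P : Profile C V) (a b : C) : ℤ :=
  ((Finset.univ.filter fun v => P.ballot v a b = true).card : ℤ) -
  ((Finset.univ.filter fun v => P.ballot v b a = true).card : ℤ)

/-- The restriction of a profile to a subset `S` of the candidates. -/
def Profile.restrict (P : Profile C V) (S : Finset C) : Profile C V where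
  cands := P.cands ∩ S
  ballot := P.ballot
  ballot_irrefl := fun v a ha => P.ballot_irrefl v a (Finset.mem_inter.mp ha).1
  ballot_asymm_total := fun v a b ha hb => P.ballot_asymm_total v a b
    (Finset.mem_inter.mp ha).1 (Finset.mem_inter.mp hb).1
  ballot_trans := fun v a b c ha hb hc => P.ballot_trans v a b c
    (Finset.mem_inter.mp ha).1 (Finset.mem_inter.mp hb).1 (Finset.mem_inter.mp hc).1

/-- The profile `P₋B` obtained from `P` by removing candidate `b` from all ballots. -/
def Profile.remove (P : Profile C V) (b : C) : Profile C V :=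
  P.restrict (P.cands.erase b)

/-- Auxiliary, fuel-based definition of the Stable Voting winners. -/
def SVaux : ℕ → Profile C V → Set C
  | 0, P => ↑P.cands
  | n + 1, P =>
    if P.cands.card ≤ 1 then ↑P.cands
    else { a | ∃ b ∈ P.cands, b ≠ a ∧ a ∈ SVaux n (P.remove b) ∧
      ∀ x ∈ P.cands, ∀ y ∈ P.cands, x ≠ y → x ∈ SVaux n (P.remove y) →
        P.margin x y ≤ P.margin a b }

/-- The set of Stable Voting winners of a profile.  If there is a single
candidate, that candidate wins; otherwise `a` is a winner iff there is a
candidate `b ≠ a` such that `a` is a Stable Voting winner after removing `b`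
and the margin of `a` vs. `b` is maximal among margins of pairs `(x, y)` of
distinct candidates such that `x` is a Stable Voting winner after removing `y`. -/
def SV (P : Profile C V) : Set C := SVaux P.cands.card P

/-- `a` beats `b` head-to-head: the margin of `a` vs. `b` is positive. -/
def Profile.beats (P : Profile C V) (a b : C) : Prop := 0 < P.margin a b

/-- A Condorcet winner: a candidate beating every other candidate head-to-head. -/
def CondorcetWinner (P : Profile C V) (a : C) : Prop :=
  a ∈ P.cands ∧ ∀ b ∈ P.cands, b ≠ a → P.beats a b

/-- `S` is a nonempty set of candidates each of whose members beats each
nonmember head-to-head. -/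
def Dominant (P : Profile C V) (S : Finset C) : Prop :=
  S ⊆ P.cands ∧ S.Nonempty ∧ ∀ a ∈ S, ∀ b ∈ P.cands, b ∉ S → P.beats a b

/-- `S` is the Smith set of `P`: the smallest nonempty set of candidates each
of whose members beats each nonmember head-to-head. -/
def IsSmith (P : Profile C V) (S : Finset C) : Prop :=
  Dominant P S ∧ ∀ T, Dominant P T → S ⊆ T

/-- A profile is uniquely weighted if distinct ordered pairs of distinct
candidates have distinct margins. -/
def UniquelyWeighted (P : Profile C V) : Prop :=
  ∀ a b a' b', a ∈ P.cands → b ∈ P.cands → a' ∈ P.cands → b' ∈ P.cands →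
    a ≠ b → a' ≠ b' → (a, b) ≠ (a', b') → P.margin a b ≠ P.margin a' b'

/-- `a` is stable for SV in `P`: there is a candidate `b` whom `a` beats
head-to-head such that `a` is a Stable Voting winner in `P₋b`. -/
def StableFor (P : Profile C V) (a : C) : Prop :=
  ∃ b ∈ P.cands, P.beats a b ∧ a ∈ SV (P.remove b)


lemma Profile.remove_cands (P : Profile C V) (b : C) :
    (P.remove b).cands = P.cands.erase b := by
  simp [Profile.remove, Profile.restrict,
    Finset.inter_eq_right.2 (Finset.erase_subset b P.cands)]

lemma Profile.margin_neg (P : Profile C V) (a b : C) :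
    P.margin a b = - P.margin b a := by
  simp [Profile.margin]

lemma SVaux_subset : ∀ (n : ℕ) (P : Profile C V), SVaux n P ⊆ ↑P.cands := by
  intro n
  induction n with
  | zero => intro P; exact fun a ha => ha
  | succ n ih =>
    intro P a ha
    rw [SVaux] at ha
    split at ha
    · exact ha
    · obtain ⟨b, hb, hba, hmem, -⟩ := ha
      have := ih (P.remove b) hmem
      rw [Profile.remove_cands] at this
      exact Finset.mem_of_mem_erase this

lemma SVaux_nonempty : ∀ (n : ℕ) (P : Profile C V),
    P.cands.Nonempty → (SVaux n P).Nonempty := by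
  classical
  intro n
  induction n with
  | zero => intro P h; exact ⟨h.choose, h.choose_spec⟩
  | succ n ih =>
    intro P h
    rw [SVaux]
    split
    · exact ⟨h.choose, h.choose_spec⟩
    · rename_i hcard
      push_neg at hcard
      -- pairs
      set T := (P.cands ×ˢ P.cands).filter
        (fun p => p.1 ≠ p.2 ∧ p.1 ∈ SVaux n (P.remove p.2)) with hT
      have hTne : T.Nonempty := by
        obtain ⟨y, hy⟩ := h
        have hne : (P.remove y).cands.Nonempty := by
          rw [Profile.remove_cands]
          rw [← Finset.card_pos, Finset.card_erase_of_mem hy]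
          omega
        obtain ⟨x, hx⟩ := ih (P.remove y) hne
        have hx' := SVaux_subset n (P.remove y) hx
        rw [Profile.remove_cands] at hx'
        refine ⟨(x, y), ?_⟩
        simp only [hT, Finset.mem_filter, Finset.mem_product]
        exact ⟨⟨Finset.mem_of_mem_erase hx', hy⟩, Finset.ne_of_mem_erase hx', hx⟩
      obtain ⟨p, hp, hmax⟩ := T.exists_max_image (fun p => P.margin p.1 p.2) hTne
      simp only [hT, Finset.mem_filter, Finset.mem_product] at hp
      refine ⟨p.1, p.2, hp.1.2, (hp.2.1).symm, hp.2.2, ?_⟩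
      intro x hx y hy hxy hmem
      exact hmax (x, y) (by
        simp only [hT, Finset.mem_filter, Finset.mem_product]
        exact ⟨⟨hx, hy⟩, hxy, hmem⟩)

/-- Stable Voting satisfies the Condorcet loser criterion: a
candidate beaten head-to-head by every other candidate is not a Stable
Voting winner. -/
theorem sv_condorcet_loser_criterion (P : Profile C V) (A : C)
    (h2 : 2 ≤ P.cands.card) (hA : A ∈ P.cands)
    (h : ∀ B ∈ P.cands, B ≠ A → P.beats B A) :
    A ∉ SV P := by
  classical
  intro hAin
  obtain ⟨m, hm⟩ : ∃ m, P.cands.card = m + 1 := ⟨P.cands.card - 1, by omega⟩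
  rw [SV, hm, SVaux] at hAin
  split at hAin
  · omega
  · obtain ⟨b, hb, hbA, -, hmax⟩ := hAin
    have hbeats := h b hb hbA
    rw [Profile.beats] at hbeats
    have hAb : P.margin A b < 0 := by
      rw [Profile.margin_neg]; omega
    -- find a winner of P.remove A
    have hne : (P.remove A).cands.Nonempty := by
      rw [Profile.remove_cands, ← Finset.card_pos, Finset.card_erase_of_mem hA]
      omega
    obtain ⟨x, hx⟩ := SVaux_nonempty m (P.remove A) hne
    have hx' := SVaux_subset m (P.remove A) hx
    rw [Profile.remove_cands] at hx'
    have hle := hmax x (Finset.mem_of_mem_erase hx') A hA (Finset.ne_of_mem_erase hx') hx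
    have := h x (Finset.mem_of_mem_erase hx') (Finset.ne_of_mem_erase hx')
    rw [Profile.beats] at this
    omega
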